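/- Let m ≥ 2 and let c^m be a second-order Reed–Muller sequence of length 2^m with parameters (P^m, b^m) decomposed as in Lemma 1. Define ỹ_j = c^m_{2j} · conj(c^m_{2j-1}) for 1 ≤ j ≤ 2^{m-1}. Then ỹ_j = i^{β} (-1)^{b_m + αᵀ a_{j-1}^{m-1}}; in particular, (ỹ_j)_{j} equals the constant i^β (-1)^{b_m} times the Walsh sequence with frequency α, and the Walsh–Hadamard transform of ỹ has a unique nonzero coefficient, located at index α with value 2^{m-1} i^{β} (-1)^{b_m}. -/

import Mathlib

/-! Two consecutive indices `2j, 2j+1` differ only in the last bit of their binary expansions,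
so the phases of `c` there differ only by the terms of the quadratic form that involve the last
coordinate; by symmetry of `P` these add up to `2 (b_m + αᵀ a) + β`. Hence `ỹ` is `i^β (-1)^{b_m}`
times a Walsh function, and its transform follows from the orthogonality of the characters
`v ↦ (-1)^{γᵀ v}` of `(ℤ/2)^m`. -/

open Complex Finset

/-- The `m`-bit binary expansion of `n`, as a vector over ℤ/2,
with the least significant bit as the last coordinate. -/
def binExp (m n : ℕ) : Fin m → ZMod 2 :=
  fun k => if Nat.testBit n (m - 1 - (k : ℕ)) then 1 else 0

/-- Inner product over ℤ/2, lifted to a natural number in {0,1}. -/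
def ip {m : ℕ} (u v : Fin m → ZMod 2) : ℕ := (∑ k, u k * v k).val

/-- The second-order Reed–Muller sequence determined by `(P, b)`,
with 0-based index `n` (so the paper's `c_j` is `rmSeq P b (j-1)`). -/
noncomputable def rmSeq {m : ℕ} (P : Matrix (Fin m) (Fin m) (ZMod 2))
    (b : Fin m → ZMod 2) (n : ℕ) : ℂ :=
  Complex.I ^ (2 * ∑ k, (b k).val * (binExp m n k).val
    + ∑ k, ∑ l, (binExp m n k).val * (P k l).val * (binExp m n l).val)

theorem binExp_succ_castSucc (m n : ℕ) (k : Fin m) :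
    binExp (m + 1) n k.castSucc = binExp m (n / 2) k := by
  have h : m + 1 - 1 - (k : ℕ) = m - 1 - k + 1 := by omega
  simp only [binExp, Fin.val_castSucc, h, Nat.testBit_add_one]

theorem val_binExp_succ_last (m n : ℕ) : (binExp (m + 1) n (Fin.last m)).val = n % 2 := by
  simp only [binExp, Fin.val_last, Nat.add_sub_cancel, Nat.sub_self, Nat.testBit_zero]
  rcases Nat.mod_two_eq_zero_or_one n with h | h <;> simp [h, ZMod.val_one]

theorem binExp_injective (m : ℕ) : Function.Injective fun j : Fin (2 ^ m) ↦ binExp m j := by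
  intro j j' h
  refine Fin.ext (Nat.eq_of_testBit_eq fun i ↦ ?_)
  by_cases hi : i < m
  · have hk := congrFun h ⟨m - 1 - i, by omega⟩
    simp only [binExp, show m - 1 - (m - 1 - i) = i by omega] at hk
    by_cases h1 : Nat.testBit j i <;> by_cases h2 : Nat.testBit j' i <;> simp_all
  · have hpow : 2 ^ m ≤ 2 ^ i := Nat.pow_le_pow_right two_pos (by omega)
    rw [Nat.testBit_lt_two_pow (j.2.trans_le hpow), Nat.testBit_lt_two_pow (j'.2.trans_le hpow)]

theorem binExp_bijective (m : ℕ) : Function.Bijective fun j : Fin (2 ^ m) ↦ binExp m j :=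
  (Fintype.bijective_iff_injective_and_card _).2 ⟨binExp_injective m, by simp⟩

theorem ip_eq_sum_val_mul_val_mod_two {m : ℕ} (u v : Fin m → ZMod 2) :
    ip u v = (∑ k, (u k).val * (v k).val) % 2 := by
  rw [ip, ← ZMod.val_natCast]
  push_cast [ZMod.natCast_val, ZMod.cast_id', id]
  rfl

theorem ip_add_left {m : ℕ} (u v w : Fin m → ZMod 2) :
    ip (u + v) w = (ip u w + ip v w) % 2 := by
  simp only [ip, Pi.add_apply, add_mul, sum_add_distrib, ZMod.val_add]

section NegOnePow

variable {R : Type*} [CommRing R]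

theorem neg_one_pow_ip {m : ℕ} (u v : Fin m → ZMod 2) :
    (-1 : R) ^ ip u v = (-1) ^ ∑ k, (u k).val * (v k).val := by
  rw [ip_eq_sum_val_mul_val_mod_two, ← neg_one_pow_eq_pow_mod_two]

theorem neg_one_pow_ip_add_left {m : ℕ} (u v w : Fin m → ZMod 2) :
    (-1 : R) ^ ip (u + v) w = (-1) ^ ip u w * (-1) ^ ip v w := by
  rw [ip_add_left, ← neg_one_pow_eq_pow_mod_two, pow_add]

theorem sum_neg_one_pow_val_mul_val (c : ZMod 2) :
    ∑ x : ZMod 2, (-1 : R) ^ (c.val * x.val) = if c = 0 then 2 else 0 := by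
  rw [show (univ : Finset (ZMod 2)) = {0, 1} from rfl, sum_pair zero_ne_one]
  obtain rfl | rfl : c = 0 ∨ c = 1 := by decide +revert
  · norm_num
  · simp [ZMod.val_one]

theorem sum_neg_one_pow_ip {m : ℕ} (γ : Fin m → ZMod 2) :
    ∑ v : Fin m → ZMod 2, (-1 : R) ^ ip γ v = if γ = 0 then 2 ^ m else 0 := by
  simp only [neg_one_pow_ip, ← prod_pow_eq_pow_sum]
  rw [← Fintype.piFinset_univ,
    ← prod_univ_sum (fun _ ↦ univ) fun k (x : ZMod 2) ↦ (-1 : R) ^ ((γ k).val * x.val)]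
  simp_rw [sum_neg_one_pow_val_mul_val, Fintype.prod_ite_zero, prod_const, card_univ,
    Fintype.card_fin, funext_iff, Pi.zero_apply]

theorem sum_neg_one_pow_ip_binExp_mul (m : ℕ) (u v : Fin m → ZMod 2) :
    ∑ j : Fin (2 ^ m), (-1 : R) ^ ip u (binExp m j) * (-1) ^ ip v (binExp m j)
      = if u = v then 2 ^ m else 0 := by
  simp_rw [← neg_one_pow_ip_add_left]
  rw [Fintype.sum_bijective _ (binExp_bijective m) _ (fun w ↦ (-1 : R) ^ ip (u + v) w)
    fun _ ↦ rfl, sum_neg_one_pow_ip]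
  have hneg : -v = v := funext fun k ↦ ZMod.neg_eq_self_mod_two (v k)
  simp_rw [add_eq_zero_iff_eq_neg, hneg]

end NegOnePow

def rmPhase {m : ℕ} (P : Matrix (Fin m) (Fin m) (ZMod 2)) (b : Fin m → ZMod 2) (n : ℕ) : ℕ :=
  2 * ∑ k, (b k).val * (binExp m n k).val
    + ∑ k, ∑ l, (binExp m n k).val * (P k l).val * (binExp m n l).val

theorem rmSeq_eq_I_pow_rmPhase {m : ℕ} (P : Matrix (Fin m) (Fin m) (ZMod 2))
    (b : Fin m → ZMod 2) (n : ℕ) : rmSeq P b n = I ^ rmPhase P b n := rfl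

theorem rmPhase_succ {m : ℕ} {P : Matrix (Fin (m + 1)) (Fin (m + 1)) (ZMod 2)} (hP : P.IsSymm)
    (b : Fin (m + 1) → ZMod 2) (n : ℕ) :
    rmPhase P b n = rmPhase (P.submatrix Fin.castSucc Fin.castSucc) (b ∘ Fin.castSucc) (n / 2)
      + n % 2 * (2 * ((b (Fin.last m)).val
          + ∑ k, (P k.castSucc (Fin.last m)).val * (binExp m (n / 2) k).val)
        + (P (Fin.last m) (Fin.last m)).val) := by
  have hsymm (k : Fin m) : P (Fin.last m) k.castSucc = P k.castSucc (Fin.last m) :=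
    hP.apply _ _
  simp only [rmPhase, Fin.sum_univ_castSucc, binExp_succ_castSucc, val_binExp_succ_last, hsymm,
    Matrix.submatrix_apply, Function.comp_apply, sum_add_distrib]
  have hcross : ∑ k, (binExp m (n / 2) k).val * (P k.castSucc (Fin.last m)).val * (n % 2)
      = ∑ k, n % 2 * (P k.castSucc (Fin.last m)).val * (binExp m (n / 2) k).val :=
    sum_congr rfl fun _ _ ↦ by ring
  rw [hcross]
  rcases Nat.mod_two_eq_zero_or_one n with h | h <;>
    simp only [h, zero_mul, mul_zero, one_mul, mul_one, sum_const_zero] <;> ring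

theorem rmSeq_mul_conj_self {m : ℕ} (P : Matrix (Fin m) (Fin m) (ZMod 2))
    (b : Fin m → ZMod 2) (n : ℕ) : rmSeq P b n * starRingEnd ℂ (rmSeq P b n) = 1 := by
  rw [rmSeq_eq_I_pow_rmPhase, map_pow, conj_I, ← mul_pow, mul_neg, I_mul_I, neg_neg, one_pow]

theorem rmSeq_two_mul_add_one {m : ℕ} {P : Matrix (Fin (m + 1)) (Fin (m + 1)) (ZMod 2)}
    (hP : P.IsSymm) (b : Fin (m + 1) → ZMod 2) (j : ℕ) :
    rmSeq P b (2 * j + 1) = rmSeq P b (2 * j) * (I ^ (P (Fin.last m) (Fin.last m)).val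
      * (-1) ^ ((b (Fin.last m)).val + ip (fun k ↦ P k.castSucc (Fin.last m)) (binExp m j))) := by
  have hodd : (2 * j + 1) / 2 = j ∧ (2 * j + 1) % 2 = 1 := by omega
  have heven : 2 * j / 2 = j ∧ 2 * j % 2 = 0 := by omega
  rw [rmSeq_eq_I_pow_rmPhase, rmSeq_eq_I_pow_rmPhase, rmPhase_succ hP,
    rmPhase_succ hP (n := 2 * j), hodd.1, hodd.2, heven.1, heven.2, pow_add (-1 : ℂ),
    neg_one_pow_ip, ← I_sq, ← pow_mul, ← pow_mul]
  ring

theorem stmt19_general (m : ℕ)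
    (P : Matrix (Fin (m + 1)) (Fin (m + 1)) (ZMod 2)) (hP : P.IsSymm)
    (α : Fin m → ZMod 2) (β : ZMod 2)
    (hα : ∀ k : Fin m, P (Fin.castSucc k) (Fin.last m) = α k)
    (hβ : P (Fin.last m) (Fin.last m) = β)
    (b : Fin (m + 1) → ZMod 2) (bm : ZMod 2)
    (hbm : b (Fin.last m) = bm)
    (ytil : Fin (2 ^ m) → ℂ)
    (hytil : ∀ j : Fin (2 ^ m),
      ytil j = rmSeq P b (2 * (j : ℕ) + 1) * (starRingEnd ℂ) (rmSeq P b (2 * (j : ℕ)))) :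
    (∀ j : Fin (2 ^ m),
      ytil j = Complex.I ^ β.val
        * (-1 : ℂ) ^ (bm.val + ip α (binExp m (j : ℕ)))) ∧
    (∀ l : Fin (2 ^ m),
      ∑ j : Fin (2 ^ m), (-1 : ℂ) ^ ip (binExp m (l : ℕ)) (binExp m (j : ℕ)) * ytil j
        = if binExp m (l : ℕ) = α then
            (2 : ℂ) ^ m * Complex.I ^ β.val * (-1 : ℂ) ^ bm.val
          else 0) := by
  have hα' : (fun k ↦ P k.castSucc (Fin.last m)) = α := funext hα
  have hy (j : Fin (2 ^ m)) : ytil j = I ^ β.val * (-1) ^ (bm.val + ip α (binExp m j)) := by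
    rw [hytil, rmSeq_two_mul_add_one hP, mul_right_comm, rmSeq_mul_conj_self, one_mul, hα', hβ,
      hbm]
  refine ⟨hy, fun l ↦ ?_⟩
  calc ∑ j : Fin (2 ^ m), (-1 : ℂ) ^ ip (binExp m l) (binExp m j) * ytil j
      = I ^ β.val * (-1) ^ bm.val * ∑ j : Fin (2 ^ m),
          (-1 : ℂ) ^ ip (binExp m l) (binExp m j) * (-1) ^ ip α (binExp m j) := by
        rw [mul_sum]
        refine sum_congr rfl fun j _ ↦ ?_
        rw [hy, pow_add]
        ring
    _ = _ := by
        rw [sum_neg_one_pow_ip_binExp_mul]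
        split_ifs <;> ring

/-- The paper's `m` is `m + 1` here. For `j : Fin (2 ^ m)` standing for the 0-based
index `j - 1`, `ỹ_j = c^m_{2j} ⋅ conj(c^m_{2j-1})` is `rmSeq P b (2*j+1) * conj (rmSeq P b (2*j))`.
It equals `i^β (-1)^{b_m + αᵀ a_{j-1}}`, and its Walsh–Hadamard transform has a unique
nonzero coefficient, at the index whose binary expansion is `α`, of value
`2^m ⋅ i^β ⋅ (-1)^{b_m}`. -/
theorem stmt19 (m : ℕ) (hm : 1 ≤ m)
    (P : Matrix (Fin (m + 1)) (Fin (m + 1)) (ZMod 2)) (hP : P.IsSymm)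
    (Q : Matrix (Fin m) (Fin m) (ZMod 2)) (α : Fin m → ZMod 2) (β : ZMod 2)
    (hQ : ∀ k l : Fin m, P (Fin.castSucc k) (Fin.castSucc l) = Q k l)
    (hα : ∀ k : Fin m, P (Fin.castSucc k) (Fin.last m) = α k)
    (hβ : P (Fin.last m) (Fin.last m) = β)
    (b : Fin (m + 1) → ZMod 2) (b' : Fin m → ZMod 2) (bm : ZMod 2)
    (hb : ∀ k : Fin m, b (Fin.castSucc k) = b' k) (hbm : b (Fin.last m) = bm)
    (ytil : Fin (2 ^ m) → ℂ)
    (hytil : ∀ j : Fin (2 ^ m),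
      ytil j = rmSeq P b (2 * (j : ℕ) + 1) * (starRingEnd ℂ) (rmSeq P b (2 * (j : ℕ)))) :
    (∀ j : Fin (2 ^ m),
      ytil j = Complex.I ^ β.val
        * (-1 : ℂ) ^ (bm.val + ip α (binExp m (j : ℕ)))) ∧
    (∀ l : Fin (2 ^ m),
      ∑ j : Fin (2 ^ m), (-1 : ℂ) ^ ip (binExp m (l : ℕ)) (binExp m (j : ℕ)) * ytil j
        = if binExp m (l : ℕ) = α then
            (2 : ℂ) ^ m * Complex.I ^ β.val * (-1 : ℂ) ^ bm.val
          else 0) :=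
  stmt19_general m P hP α β hα hβ b bm hbm ytil hytil
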